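/- Let p be a prime with 3 | (p − 1) and ω ∈ F_p a primitive third root of unity. Let C be the cyclic code of length 3p over F_p with generator polynomial g(x) = (x−1)^5 (x−ω)^3 (x−ω^2)^3. Then C has dimension 3p − 11, minimum Hamming distance 6, and minimum symbol-pair distance 12 (so C is an AMDS (3p, 12)_p symbol-pair code). -/

import Mathlib

open Polynomial

/-- Hamming weight of a cyclic word `x : ZMod n → F`. -/
def hammingWt {F : Type*} [Zero F] [DecidableEq F] (n : ℕ) (x : ZMod n → F) : ℕ :=
  ((Finset.range n).filter fun i : ℕ => x (↑i) ≠ 0).card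

/-- Symbol-pair weight of a cyclic word `x : ZMod n → F`. -/
def pairWt {F : Type*} [Zero F] [DecidableEq F] (n : ℕ) (x : ZMod n → F) : ℕ :=
  ((Finset.range n).filter fun i : ℕ =>
    (x (↑i), x (↑i + 1)) ≠ ((0 : F), (0 : F))).card

/-- Symbol-pair distance between two words of length `n`. -/
def pairDist {F : Type*} [DecidableEq F] (n : ℕ) (x y : ZMod n → F) : ℕ :=
  ((Finset.range n).filter fun i : ℕ =>
    (x (↑i), x (↑i + 1)) ≠ (y (↑i), y (↑i + 1))).card

/-- The polynomial associated to a word. -/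
noncomputable def toPoly {F : Type*} [Semiring F] (n : ℕ) (x : ZMod n → F) : F[X] :=
  ∑ i ∈ Finset.range n, Polynomial.C (x (↑i)) * X ^ i

/-- The cyclic code of length `n` with generator polynomial `g`:
a word of length `n` is a codeword iff its associated polynomial
(of degree `< n`) is divisible by `g`. -/
def cyclicCode {F : Type*} [Field F] (n : ℕ) (g : F[X]) : Set (ZMod n → F) :=
  {c | g ∣ toPoly n c}

/-!
A root `α` of `g` of multiplicity `m` gives the moment relations `∑ cᵢ iʲ αⁱ = 0` (`j < m`) for
every codeword `c`. All three cube roots of unity have multiplicity at least `3`, so Fourier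
inversion over `⟨ω⟩` splits these relations along the residue classes of `i` modulo `3`:
`∑_{i ≡ r} cᵢ iʲ = 0` for `j < 3`. On a residue class, `i ↦ i mod p` is injective (Chinese
remainder theorem), so by Vandermonde each class carries either no nonzero letter or at least `4`;
if only one class is occupied, the root `1` of multiplicity `5` gives at least `6` in the same way.
The pair weight is the Hamming weight plus the number of runs of nonzero letters, and a letter
whose predecessor class is empty starts a run; this yields pair weight at least `12` in each case.
The codeword `(x³ - 1)⁵` has `6` nonzero letters, hence pair weight at most `12`; the dimension is
`3p - deg g`.
-/
open Polynomial Finset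

section Words

variable {F : Type*}

lemma coeff_toPoly [Semiring F] (n : ℕ) (x : ZMod n → F) (j : ℕ) :
    (toPoly n x).coeff j = if j < n then x j else 0 := by
  simp only [toPoly, finsetSum_coeff, coeff_C_mul, coeff_X_pow, mul_ite, mul_one, mul_zero,
    sum_ite_eq, mem_range]

lemma degree_toPoly_lt [Semiring F] (n : ℕ) (x : ZMod n → F) : (toPoly n x).degree < n := by
  refine (degree_lt_iff_coeff_zero _ _).2 fun j hj => ?_
  rw [coeff_toPoly, if_neg (by exact_mod_cast not_lt.2 hj)]

lemma natDegree_toPoly_lt [Semiring F] {n : ℕ} [NeZero n] (x : ZMod n → F) :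
    (toPoly n x).natDegree < n := by
  rcases eq_or_ne (toPoly n x) 0 with h | h
  · rw [h, natDegree_zero]
    exact Nat.pos_of_neZero n
  · exact (natDegree_lt_iff_degree_lt h).2 (degree_toPoly_lt n x)

def ofPoly [Semiring F] (n : ℕ) (P : F[X]) : ZMod n → F := fun i => P.coeff i.val

lemma ofPoly_toPoly [Semiring F] {n : ℕ} [NeZero n] (x : ZMod n → F) :
    ofPoly n (toPoly n x) = x := by
  ext i
  rw [ofPoly, coeff_toPoly, if_pos (ZMod.val_lt i), ZMod.natCast_zmod_val]

lemma toPoly_ofPoly [Semiring F] {n : ℕ} {P : F[X]} (hP : P.degree < n) :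
    toPoly n (ofPoly n P) = P := by
  ext j
  rw [coeff_toPoly]
  split_ifs with h
  · rw [ofPoly, ZMod.val_natCast, Nat.mod_eq_of_lt h]
  · exact (coeff_eq_zero_of_degree_lt (hP.trans_le (by exact_mod_cast not_lt.1 h))).symm

lemma sum_range_eq_sum_zmod {M : Type*} [AddCommMonoid M] {n : ℕ} [NeZero n] (f : ℕ → M) :
    ∑ i ∈ range n, f i = ∑ i : ZMod n, f i.val :=
  sum_nbij' (fun i => (i : ZMod n)) ZMod.val (by simp) (by simp [ZMod.val_lt])
    (fun i hi => by simp [ZMod.val_natCast_of_lt (mem_range.1 hi)]) (by simp)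
    (fun i hi => by simp [ZMod.val_natCast_of_lt (mem_range.1 hi)])

end Words

section Code

variable {F : Type*} [Field F]

lemma toPoly_ofPoly_mul {n : ℕ} {g Q : F[X]} (hg : g ≠ 0) (hgn : g.natDegree ≤ n)
    (hQ : Q ∈ degreeLT F (n - g.natDegree)) : toPoly n (ofPoly n (g * Q)) = g * Q := by
  refine toPoly_ofPoly ?_
  rw [degree_mul, degree_eq_natDegree hg]
  calc (g.natDegree : WithBot ℕ) + Q.degree < g.natDegree + ↑(n - g.natDegree) :=
        WithBot.add_lt_add_left WithBot.coe_ne_bot (mem_degreeLT.1 hQ)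
    _ = n := by norm_cast; omega

lemma range_ofPoly_mul_eq_cyclicCode {n : ℕ} [NeZero n] {g : F[X]} (hg : g ≠ 0)
    (hgn : g.natDegree ≤ n) :
    Set.range (fun Q : degreeLT F (n - g.natDegree) => ofPoly n (g * (Q : F[X]))) =
      cyclicCode n g := by
  ext x
  constructor
  · rintro ⟨Q, rfl⟩
    change g ∣ toPoly n (ofPoly n (g * Q))
    rw [toPoly_ofPoly_mul hg hgn Q.2]
    exact dvd_mul_right g Q
  · rintro ⟨Q, hQ⟩
    have hQdeg : Q.degree < ↑(n - g.natDegree) := by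
      rcases eq_or_ne Q 0 with rfl | hQ0
      · exact degree_zero.trans_lt (WithBot.bot_lt_coe _)
      · have hx := natDegree_toPoly_lt x
        rw [hQ, natDegree_mul hg hQ0] at hx
        rw [degree_eq_natDegree hQ0]
        exact_mod_cast (by omega : Q.natDegree < n - g.natDegree)
    exact ⟨⟨Q, mem_degreeLT.2 hQdeg⟩, by simp only [← hQ, ofPoly_toPoly]⟩

lemma card_cyclicCode [Fintype F] {n : ℕ} [NeZero n] {g : F[X]} (hg : g ≠ 0)
    (hgn : g.natDegree ≤ n) :
    Nat.card (cyclicCode n g) = Fintype.card F ^ (n - g.natDegree) := by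
  have hinj : Function.Injective
      (fun Q : degreeLT F (n - g.natDegree) => ofPoly n (g * (Q : F[X]))) := by
    intro Q Q' h
    have h' := congrArg (toPoly n) h
    simp only [toPoly_ofPoly_mul hg hgn Q.2, toPoly_ofPoly_mul hg hgn Q'.2] at h'
    exact Subtype.ext (mul_left_cancel₀ hg h')
  rw [← range_ofPoly_mul_eq_cyclicCode hg hgn, Nat.card_range_of_injective hinj,
    Nat.card_congr (degreeLTEquiv F _).toEquiv, Nat.card_eq_fintype_card, Fintype.card_fun,
    Fintype.card_fin]

end Code

section Moments

variable {R : Type*} [CommRing R]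

lemma coeff_iterate_X_mul_derivative (P : R[X]) (j i : ℕ) :
    ((fun Q => X * derivative Q)^[j] P).coeff i = P.coeff i * (i : R) ^ j := by
  induction j with
  | zero => simp
  | succ j ih =>
    rw [Function.iterate_succ_apply']
    cases i with
    | zero => simp
    | succ i => rw [coeff_X_mul, coeff_derivative, ih]; push_cast; ring

lemma pow_sub_dvd_iterate_X_mul_derivative {P Q : R[X]} {m : ℕ} (h : Q ^ m ∣ P) (j : ℕ) :
    Q ^ (m - j) ∣ (fun P => X * derivative P)^[j] P := by
  induction j with
  | zero => simpa
  | succ j ih =>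
    rw [Function.iterate_succ_apply', Nat.sub_succ]
    exact (pow_sub_one_dvd_derivative_of_pow_dvd ih).mul_left X

/-- The sum is `((X d/dX)ʲ P)(α)`, and `X d/dX` lowers the multiplicity of the root `α` by at
most one. -/
lemma sum_coeff_mul_pow_mul_pow_eq_zero {P : R[X]} {α : R} {m j n : ℕ} (hP : P.natDegree < n)
    (h : (X - C α) ^ m ∣ P) (hj : j < m) :
    ∑ i ∈ range n, P.coeff i * (i : R) ^ j * α ^ i = 0 := by
  set Q := (fun P => X * derivative P)^[j] P
  have hroot : Q.IsRoot α := dvd_iff_isRoot.1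
    ((dvd_pow_self _ (by omega : m - j ≠ 0)).trans (pow_sub_dvd_iterate_X_mul_derivative h j))
  have hQ : Q.natDegree < n := (natDegree_le_iff_coeff_eq_zero.2 fun i hi => by
    rw [coeff_iterate_X_mul_derivative, coeff_eq_zero_of_natDegree_lt hi, zero_mul]).trans_lt hP
  rw [← hroot.eq_zero, eval_eq_sum_range' hQ]
  simp only [Q, coeff_iterate_X_mul_derivative]

end Moments

lemma sum_mul_val_pow_mul_pow_eq_zero {R : Type*} [CommRing R] {n m j : ℕ} [NeZero n]
    {x : ZMod n → R} {α : R} (h : (X - C α) ^ m ∣ toPoly n x) (hj : j < m) :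
    ∑ i : ZMod n, x i * (i.val : R) ^ j * α ^ i.val = 0 := by
  have := sum_coeff_mul_pow_mul_pow_eq_zero (natDegree_toPoly_lt x) h hj
  rw [sum_range_eq_sum_zmod] at this
  simpa only [coeff_toPoly, if_pos (ZMod.val_lt _), ZMod.natCast_zmod_val] using this

section Interpolation

variable {ι F : Type*} [Field F] {s : Finset ι} {c v : ι → F} {m : ℕ}

lemma sum_mul_eval_eq_zero_of_moments (h : ∀ j < m, ∑ i ∈ s, c i * v i ^ j = 0) {q : F[X]}
    (hq : q.natDegree < m) : ∑ i ∈ s, c i * q.eval (v i) = 0 := by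
  simp_rw [eval_eq_sum_range' hq, mul_sum]
  rw [sum_comm]
  refine sum_eq_zero fun j hj => ?_
  rw [← mul_zero (q.coeff j), ← h j (mem_range.1 hj), mul_sum]
  exact sum_congr rfl fun i _ => by ring

lemma eq_zero_of_moments_of_card_le [DecidableEq ι] (hv : Set.InjOn v s) (hs : #s ≤ m)
    (h : ∀ j < m, ∑ i ∈ s, c i * v i ^ j = 0) {i₀ : ι} (hi₀ : i₀ ∈ s) : c i₀ = 0 := by
  have hq : (Lagrange.basis s v i₀).natDegree < m := by
    rw [Lagrange.natDegree_basis hv hi₀]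
    have := card_pos.2 ⟨i₀, hi₀⟩
    omega
  have := sum_mul_eval_eq_zero_of_moments h hq
  rwa [sum_eq_single_of_mem i₀ hi₀ fun i hi hne => by rw [Lagrange.eval_basis_of_ne hne.symm hi,
    mul_zero], Lagrange.eval_basis_self hv hi₀, mul_one] at this

lemma card_filter_ne_zero_eq_zero_or_lt [DecidableEq ι] [DecidableEq F] (hv : Set.InjOn v s)
    (h : ∀ j < m, ∑ i ∈ s, c i * v i ^ j = 0) :
    #{i ∈ s | c i ≠ 0} = 0 ∨ m < #{i ∈ s | c i ≠ 0} := by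
  by_contra! hcon
  obtain ⟨i₀, hi₀⟩ := card_pos.1 (Nat.pos_of_ne_zero hcon.1)
  refine (mem_filter.1 hi₀).2 <|
    eq_zero_of_moments_of_card_le (hv.mono ?_) hcon.2 (fun j hj => ?_) hi₀
  · exact coe_subset.2 (filter_subset _ _)
  · rw [sum_filter_of_ne fun i _ hi => left_ne_zero_of_mul hi]
    exact h j hj

end Interpolation

/-- Fourier inversion: the class sums `Sᵣ` solve the Vandermonde system `∑ᵣ Sᵣ (ζʳ)ᵏ = 0`,
`k < d`, in the distinct points `ζʳ`. -/
lemma sum_filter_eq_zero_of_isPrimitiveRoot {ι F : Type*} [Field F] {d : ℕ} [NeZero d] {ζ : F}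
    (hζ : IsPrimitiveRoot ζ d) {s : Finset ι} (e : ι → ℕ) (f : ι → F)
    (h : ∀ k < d, ∑ i ∈ s, f i * (ζ ^ k) ^ e i = 0) (r : ZMod d) :
    ∑ i ∈ s with (e i : ZMod d) = r, f i = 0 := by
  classical
  have hinj : Set.InjOn (fun r : ZMod d => ζ ^ r.val) (univ : Finset (ZMod d)) :=
    fun a _ b _ hab => ZMod.val_injective d (hζ.pow_inj (ZMod.val_lt a) (ZMod.val_lt b) hab)
  refine eq_zero_of_moments_of_card_le (c := fun r => ∑ i ∈ s with (e i : ZMod d) = r, f i)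
    (m := d) hinj (by simp) (fun k hk => ?_) (mem_univ r)
  rw [← h k hk, ← sum_fiberwise s (fun i => (e i : ZMod d))]
  refine sum_congr rfl fun r' _ => ?_
  rw [sum_mul]
  refine sum_congr rfl fun i hi => ?_
  rw [← (mem_filter.1 hi).2, ZMod.val_natCast, hζ.eq_orderOf, pow_mod_orderOf, ← pow_mul,
    ← pow_mul, mul_comm k]

def classSupport {F : Type*} [Zero F] [DecidableEq F] {n : ℕ} [NeZero n] (d : ℕ)
    (x : ZMod n → F) (r : ZMod d) : Finset (ZMod n) :=
  {i | (i.val : ZMod d) = r ∧ x i ≠ 0}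

section Weights

variable {F : Type*} [Zero F] [DecidableEq F] {n : ℕ} [NeZero n]

lemma card_filter_range_eq_card (P : ZMod n → Prop) [DecidablePred P] :
    #((range n).filter fun i : ℕ => P i) = #{i : ZMod n | P i} := by
  simp only [card_filter, sum_range_eq_sum_zmod, ZMod.natCast_zmod_val]

lemma hammingWt_eq_card (x : ZMod n → F) : hammingWt n x = #{i | x i ≠ 0} :=
  card_filter_range_eq_card fun i => x i ≠ 0

lemma pairWt_eq_hammingWt_add (x : ZMod n → F) :
    pairWt n x = hammingWt n x + #{i | x i = 0 ∧ x (i + 1) ≠ 0} := by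
  rw [pairWt, card_filter_range_eq_card fun i => (x i, x (i + 1)) ≠ (0, 0), hammingWt_eq_card,
    ← card_filter_add_card_filter_not (fun i => x i ≠ 0), filter_filter, filter_filter]
  congr 2 <;> ext i <;>
    simp only [mem_filter, mem_univ, true_and, Ne, Prod.mk.injEq, not_and_or] <;> tauto

lemma pairWt_le_two_mul_hammingWt (x : ZMod n → F) : pairWt n x ≤ 2 * hammingWt n x := by
  have h : #{i | x i = 0 ∧ x (i + 1) ≠ 0} ≤ #{i | x i ≠ 0} :=
    card_le_card_of_injOn (· + 1) (fun i hi => by simp_all) (add_left_injective 1).injOn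
  rw [pairWt_eq_hammingWt_add, hammingWt_eq_card]
  omega

lemma hammingWt_eq_sum_card_classSupport (x : ZMod n → F) (d : ℕ) [NeZero d] :
    hammingWt n x = ∑ r : ZMod d, #(classSupport d x r) := by
  rw [hammingWt_eq_card, card_eq_sum_card_fiberwise (f := fun i => (i.val : ZMod d))
    (t := univ) fun _ _ => mem_univ _]
  refine sum_congr rfl fun r _ => ?_
  rw [classSupport, filter_filter]
  simp only [and_comm]

/-- Every nonzero letter of class `r + 1` is preceded by a letter of the empty class `r`. -/
lemma card_classSupport_add_one_le {d : ℕ} (hdn : d ∣ n) (x : ZMod n → F) {r : ZMod d}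
    (hr : classSupport d x r = ∅) :
    #(classSupport d x (r + 1)) ≤ #{i | x i = 0 ∧ x (i + 1) ≠ 0} := by
  have hval : ∀ i : ZMod n, ((i + 1).val : ZMod d) = (i.val : ZMod d) + 1 := fun i => by
    rw [← ZMod.cast_eq_val, ← ZMod.cast_eq_val, ZMod.cast_add hdn, ZMod.cast_one hdn]
  refine card_le_card_of_injOn (· - 1) (fun i hi => ?_) (sub_left_injective).injOn
  simp only [classSupport, coe_filter, Set.mem_ofPred_eq, mem_univ, true_and] at hi ⊢
  have hclass : ((i - 1).val : ZMod d) = r := by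
    have := hval (i - 1)
    rw [sub_add_cancel, hi.1] at this
    exact add_right_cancel this.symm
  refine ⟨?_, by simpa using hi.2⟩
  by_contra hne
  have : i - 1 ∈ classSupport d x r := mem_filter.2 ⟨mem_univ _, hclass, hne⟩
  simp [hr] at this

end Weights

section ResidueClasses

variable {p d : ℕ} [Fact p.Prime] [NeZero d]

lemma coprime_of_isPrimitiveRoot {ζ : ZMod p} (hζ : IsPrimitiveRoot ζ d) : d.Coprime p := by
  have := hζ.neZero'
  refine Nat.coprime_comm.1 ((Nat.Prime.coprime_iff_not_dvd Fact.out).2 fun h => ?_)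
  exact NeZero.ne ((d : ℕ) : ZMod p) ((ZMod.natCast_eq_zero_iff _ _).2 h)

lemma injOn_natCast_val (hdp : d.Coprime p) (r : ZMod d) :
    Set.InjOn (fun i : ZMod (d * p) => (i.val : ZMod p)) {i | (i.val : ZMod d) = r} := by
  intro i hi j hj hij
  have hd : i.val ≡ j.val [MOD d] := (ZMod.natCast_eq_natCast_iff _ _ _).1 (hi.trans hj.symm)
  have hp : i.val ≡ j.val [MOD p] := (ZMod.natCast_eq_natCast_iff _ _ _).1 hij
  rw [← ZMod.natCast_zmod_val i, ← ZMod.natCast_zmod_val j, ZMod.natCast_eq_natCast_iff]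
  exact (Nat.modEq_and_modEq_iff_modEq_mul hdp).1 ⟨hd, hp⟩

variable {c : ZMod (d * p) → ZMod p} {m : ℕ}

lemma card_classSupport_eq_zero_or_lt_of_moments (hdp : d.Coprime p) (r : ZMod d)
    (h : ∀ j < m, ∑ i with (i.val : ZMod d) = r, c i * (i.val : ZMod p) ^ j = 0) :
    #(classSupport d c r) = 0 ∨ m < #(classSupport d c r) := by
  have hinj := injOn_natCast_val hdp r
  rw [← coe_filter_univ] at hinj
  have := card_filter_ne_zero_eq_zero_or_lt hinj h
  rwa [filter_filter] at this

lemma card_classSupport_eq_zero_or_lt_of_isPrimitiveRoot {ζ : ZMod p} (hζ : IsPrimitiveRoot ζ d)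
    (hc : ∀ k < d, (X - C (ζ ^ k)) ^ m ∣ toPoly (d * p) c) (r : ZMod d) :
    #(classSupport d c r) = 0 ∨ m < #(classSupport d c r) :=
  card_classSupport_eq_zero_or_lt_of_moments (coprime_of_isPrimitiveRoot hζ) r fun j hj =>
    sum_filter_eq_zero_of_isPrimitiveRoot hζ ZMod.val (fun i => c i * (i.val : ZMod p) ^ j)
      (fun k hk => sum_mul_val_pow_mul_pow_eq_zero (hc k hk) hj) r

lemma card_classSupport_eq_zero_or_lt_of_forall_ne_zero (hdp : d.Coprime p)
    (hc : (X - C 1) ^ m ∣ toPoly (d * p) c) {r : ZMod d}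
    (hr : ∀ i, c i ≠ 0 → (i.val : ZMod d) = r) :
    #(classSupport d c r) = 0 ∨ m < #(classSupport d c r) := by
  refine card_classSupport_eq_zero_or_lt_of_moments hdp r fun j hj => ?_
  rw [sum_filter_of_ne fun i _ hi => hr i (left_ne_zero_of_mul hi)]
  simpa using sum_mul_val_pow_mul_pow_eq_zero hc hj

end ResidueClasses

lemma six_le_hammingWt_and_twelve_le_pairWt {F : Type*} [Zero F] [DecidableEq F] {n : ℕ}
    [NeZero n] (hn : 3 ∣ n) {x : ZMod n → F} (hx : x ≠ 0)
    (hclass : ∀ r : ZMod 3, #(classSupport 3 x r) = 0 ∨ 3 < #(classSupport 3 x r))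
    (hsingle : ∀ r : ZMod 3, (∀ i, x i ≠ 0 → (i.val : ZMod 3) = r) →
      #(classSupport 3 x r) = 0 ∨ 5 < #(classSupport 3 x r)) :
    6 ≤ hammingWt n x ∧ 12 ≤ pairWt n x := by
  set k := fun r : ZMod 3 => #(classSupport 3 x r)
  set runs := #{i | x i = 0 ∧ x (i + 1) ≠ 0}
  have hH : hammingWt n x = k 0 + k 1 + k 2 := by
    rw [hammingWt_eq_sum_card_classSupport x 3]
    exact Fin.sum_univ_three k
  have hpos : hammingWt n x ≠ 0 := by
    obtain ⟨i, hi⟩ := Function.ne_iff.1 hx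
    rw [hammingWt_eq_card]
    exact card_ne_zero_of_mem (mem_filter.2 ⟨mem_univ i, hi⟩)
  have hP : pairWt n x = hammingWt n x + runs := pairWt_eq_hammingWt_add x
  have hrun : ∀ r, k r = 0 → k (r + 1) ≤ runs := fun r hr =>
    card_classSupport_add_one_le hn x (card_eq_zero.1 hr)
  have hothers : ∀ r r' : ZMod 3, r' ≠ r → r' = r + 1 ∨ r' = r + 2 := by decide
  have hsing : ∀ r, k (r + 1) = 0 → k (r + 2) = 0 → k r = 0 ∨ 5 < k r := by
    refine fun r h1 h2 => hsingle r fun i hi => ?_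
    by_contra hne
    have hmem : i ∈ classSupport 3 x (i.val : ZMod 3) := mem_filter.2 ⟨mem_univ i, rfl, hi⟩
    obtain hr | hr := hothers r _ hne <;> rw [hr] at hmem
    exacts [card_ne_zero_of_mem hmem h1, card_ne_zero_of_mem hmem h2]
  have : k 0 = 0 ∨ 3 < k 0 := hclass 0
  have : k 1 = 0 ∨ 3 < k 1 := hclass 1
  have : k 2 = 0 ∨ 3 < k 2 := hclass 2
  have : k 0 = 0 → k 1 ≤ runs := hrun 0
  have : k 1 = 0 → k 2 ≤ runs := hrun 1
  have : k 2 = 0 → k 0 ≤ runs := hrun 2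
  have : k 1 = 0 → k 2 = 0 → k 0 = 0 ∨ 5 < k 0 := hsing 0
  have : k 2 = 0 → k 0 = 0 → k 1 = 0 ∨ 5 < k 1 := hsing 1
  have : k 0 = 0 → k 1 = 0 → k 2 = 0 ∨ 5 < k 2 := hsing 2
  omega

section Witness

lemma card_support_expand_le {R : Type*} [CommSemiring R] {k : ℕ} (hk : 0 < k) (f : R[X]) :
    #(expand R k f).support ≤ #f.support := by
  classical
  refine (card_le_card fun i hi => ?_).trans (card_image_le (f := (k * ·)))
  rw [mem_support_iff, coeff_expand hk] at hi
  split_ifs at hi with hki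
  · exact mem_image.2 ⟨i / k, mem_support_iff.2 hi, Nat.mul_div_cancel' hki⟩
  · exact absurd rfl hi

lemma card_support_X_pow_sub_one_pow_le {R : Type*} [CommRing R] {k : ℕ} (hk : 0 < k) (m : ℕ) :
    #((X ^ k - 1 : R[X]) ^ m).support ≤ m + 1 := by
  have hexpand : (X ^ k - 1 : R[X]) ^ m = expand R k ((X - C 1) ^ m) := by
    rw [map_pow, map_sub, expand_X, expand_C, C_1]
  rw [hexpand]
  refine (card_support_expand_le hk _).trans <|
    (card_le_card supp_subset_range_natDegree_succ).trans ?_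
  have := natDegree_pow_le_of_le m (natDegree_X_sub_C_le (1 : R))
  rw [card_range]
  omega

lemma hammingWt_ofPoly_le {F : Type*} [Semiring F] [DecidableEq F] {n : ℕ} [NeZero n]
    (P : F[X]) : hammingWt n (ofPoly n P) ≤ #P.support := by
  rw [hammingWt_eq_card]
  exact card_le_card_of_injOn ZMod.val
    (fun i hi => mem_support_iff.2 (mem_filter.1 (mem_coe.1 hi)).2) (ZMod.val_injective n).injOn

lemma exists_mem_cyclicCode_hammingWt_le {F : Type*} [Field F] [DecidableEq F] {n : ℕ}
    [NeZero n] (hn : 15 < n) {g : F[X]} (hg : g ∣ (X ^ 3 - 1) ^ 5) :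
    ∃ c ∈ cyclicCode n g, c ≠ 0 ∧ hammingWt n c ≤ 6 := by
  have hdeg : ((X ^ 3 - 1 : F[X]) ^ 5).degree < n := by
    have : ((X ^ 3 - 1 : F[X]) ^ 5).natDegree = 15 := by compute_degree!
    exact degree_le_natDegree.trans_lt (by rw [this]; exact_mod_cast hn)
  refine ⟨ofPoly n ((X ^ 3 - 1) ^ 5), ?_, fun h => ?_,
    (hammingWt_ofPoly_le _).trans (card_support_X_pow_sub_one_pow_le (by norm_num) 5)⟩
  · change g ∣ toPoly n _
    rwa [toPoly_ofPoly hdeg]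
  · have := congrFun h 0
    simp [ofPoly, coeff_zero_eq_eval_zero] at this

lemma X_pow_three_sub_one_eq {R : Type*} [CommRing R] [IsDomain R] {ω : R}
    (hω : IsPrimitiveRoot ω 3) : (X ^ 3 - 1 : R[X]) = (X - 1) * (X - C ω) * (X - C (ω ^ 2)) := by
  have hcube : C ω ^ 3 = (1 : R[X]) := by rw [← C_pow, hω.pow_eq_one, C_1]
  have hsum : 1 + C ω + C ω ^ 2 = (0 : R[X]) := by
    have := hω.geom_sum_eq_zero (by norm_num)
    simp only [sum_range_succ, sum_range_zero, zero_add, pow_zero, pow_one] at this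
    rw [← C_pow, ← C_1, ← C_add, ← C_add, this, C_0]
  rw [C_pow]
  linear_combination (X ^ 2 - C ω * X) * hsum + hcube

end Witness

lemma six_le_hammingWt_and_twelve_le_pairWt_of_mem {p : ℕ} [Fact p.Prime] {ω : ZMod p}
    (hω : IsPrimitiveRoot ω 3) {c : ZMod (3 * p) → ZMod p}
    (hc : c ∈ cyclicCode (3 * p) ((X - 1) ^ 5 * (X - C ω) ^ 3 * (X - C (ω ^ 2)) ^ 3))
    (hc0 : c ≠ 0) : 6 ≤ hammingWt (3 * p) c ∧ 12 ≤ pairWt (3 * p) c := by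
  have hroots : ∀ k < 3, (X - C (ω ^ k)) ^ 3 ∣ toPoly (3 * p) c := by
    intro k hk
    refine Dvd.dvd.trans ?_ hc
    interval_cases k
    · rw [pow_zero, C_1]
      exact (pow_dvd_pow _ (by norm_num)).mul_right _ |>.mul_right _
    · rw [pow_one]
      exact (dvd_mul_left _ _).mul_right _
    · exact dvd_mul_left _ _
  have hone : (X - C 1) ^ 5 ∣ toPoly (3 * p) c := by
    rw [C_1]
    exact ((dvd_mul_right _ _).mul_right _).trans hc
  exact six_le_hammingWt_and_twelve_le_pairWt (dvd_mul_right 3 p) hc0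
    (card_classSupport_eq_zero_or_lt_of_isPrimitiveRoot hω hroots)
    fun _ => card_classSupport_eq_zero_or_lt_of_forall_ne_zero (coprime_of_isPrimitiveRoot hω) hone

theorem stmt_15 (p : ℕ) [hp : Fact p.Prime] (hdvd : 3 ∣ p - 1)
    (ω : ZMod p) (hω : IsPrimitiveRoot ω 3) :
    Nat.card (cyclicCode (3 * p)
        ((X - 1) ^ 5 * (X - Polynomial.C ω) ^ 3 * (X - Polynomial.C (ω ^ 2)) ^ 3 : (ZMod p)[X]))
      = p ^ (3 * p - 11) ∧
    (∃ c ∈ cyclicCode (3 * p)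
        ((X - 1) ^ 5 * (X - Polynomial.C ω) ^ 3 * (X - Polynomial.C (ω ^ 2)) ^ 3 : (ZMod p)[X]),
      c ≠ 0 ∧ hammingWt (3 * p) c = 6) ∧
    (∀ c ∈ cyclicCode (3 * p)
        ((X - 1) ^ 5 * (X - Polynomial.C ω) ^ 3 * (X - Polynomial.C (ω ^ 2)) ^ 3 : (ZMod p)[X]),
      c ≠ 0 → 6 ≤ hammingWt (3 * p) c) ∧
    (∃ c ∈ cyclicCode (3 * p)
        ((X - 1) ^ 5 * (X - Polynomial.C ω) ^ 3 * (X - Polynomial.C (ω ^ 2)) ^ 3 : (ZMod p)[X]),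
      c ≠ 0 ∧ pairWt (3 * p) c = 12) ∧
    (∀ c ∈ cyclicCode (3 * p)
        ((X - 1) ^ 5 * (X - Polynomial.C ω) ^ 3 * (X - Polynomial.C (ω ^ 2)) ^ 3 : (ZMod p)[X]),
      c ≠ 0 → 12 ≤ pairWt (3 * p) c) := by
  have hp7 : 7 ≤ p := by
    have : p ≠ 4 := by rintro rfl; exact absurd hp.out (by norm_num)
    have := hp.out.two_le
    omega
  set g : (ZMod p)[X] := (X - 1) ^ 5 * (X - C ω) ^ 3 * (X - C (ω ^ 2)) ^ 3
  have hg : g.natDegree = 11 := by simp only [g]; compute_degree!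
  have hlower := fun c (hc : c ∈ cyclicCode (3 * p) g) hc0 =>
    six_le_hammingWt_and_twelve_le_pairWt_of_mem hω hc hc0
  have hgdvd : g ∣ (X ^ 3 - 1) ^ 5 := by
    rw [X_pow_three_sub_one_eq hω, mul_pow, mul_pow]
    exact mul_dvd_mul (mul_dvd_mul dvd_rfl (pow_dvd_pow _ (by norm_num)))
      (pow_dvd_pow _ (by norm_num))
  obtain ⟨c₀, hc₀, hc₀0, hwt⟩ := exists_mem_cyclicCode_hammingWt_le (n := 3 * p) (by omega) hgdvd
  refine ⟨?_, ⟨c₀, hc₀, hc₀0, le_antisymm hwt (hlower c₀ hc₀ hc₀0).1⟩,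
    fun c hc hc0 => (hlower c hc hc0).1, ⟨c₀, hc₀, hc₀0, ?_⟩, fun c hc hc0 => (hlower c hc hc0).2⟩
  · rw [card_cyclicCode (ne_zero_of_natDegree_gt (n := 0) (by omega)) (by omega), ZMod.card, hg]
  · exact le_antisymm ((pairWt_le_two_mul_hammingWt c₀).trans (by omega)) (hlower c₀ hc₀ hc₀0).2
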